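/- Let N, n ≥ 1 and m_1, …, m_N ≥ 1. Let A ∈ ℝ^{n×n}, B^j ∈ ℝ^{n×m_j}, K^j, K̃^j ∈ ℝ^{m_j×n} with ‖K̃^j − K^j‖₂ ≤ ε for every j, and let R^{ij} ∈ ℝ^{m_j×m_j} be given for a fixed i and all j ∈ {1,…,N}. Set F = A + Σ_{j=1}^N B^j K^j, F̃ = A + Σ_{j=1}^N B^j K̃^j, λ := ‖F‖₂, b := Σ_{j=1}^N ‖B^j‖₂, and suppose λ + bε < 1. Let M ∈ ℝ satisfy (t−1)(λ+bε)^{t−2} ≤ M for every integer t ≥ 2. Then for every integer t ≥ 1: Σ_{j=1}^N ‖(K̃^j F̃^{t−1})^⊤ R^{ij} (K̃^j F̃^{t−1}) − (K^j F^{t−1})^⊤ R^{ij} (K^j F^{t−1})‖₂ ≤ ε² Σ_{j=1}^N ‖R^{ij}‖₂ (‖K^j‖₂ b M + 1) + 2ε Σ_{j=1}^N ‖R^{ij}‖₂ ‖K^j‖₂ (‖K^j‖₂ b M + 1). -/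

import Mathlib

/-!
Write `F̃ = F + Σⱼ Bʲ (K̃ʲ − Kʲ)`, so `‖F̃ − F‖₂ ≤ bε` and both `F` and `F̃` have norm at most
`ρ := λ + bε < 1`. Telescoping `F̃^{s+1} − F^{s+1} = F̃ (F̃^s − F^s) + (F̃ − F) F^s` gives
`‖F̃^s − F^s‖₂ ≤ s ρ^{s−1} bε ≤ M bε`, hence `‖K̃ʲF̃^s − KʲF^s‖₂ ≤ ε (‖Kʲ‖₂ b M + 1)`. Finally
`Xᵀ R X − Yᵀ R Y = Xᵀ R (X − Y) + (X − Y)ᵀ R Y` for `X = K̃ʲF̃^s`, `Y = KʲF^s`, where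
`‖X‖₂ ≤ ‖Kʲ‖₂ + ε` and `‖Y‖₂ ≤ ‖Kʲ‖₂`.
-/

open Matrix BigOperators

/-- The spectral (operator 2-)norm of a real matrix. -/
noncomputable def sn {r c : ℕ} (A : Matrix (Fin r) (Fin c) ℝ) : ℝ :=
  ‖LinearMap.toContinuousLinearMap (Matrix.toEuclideanLin A)‖

open Finset

open scoped Matrix.Norms.L2Operator

lemma sn_eq_l2_opNorm {r c : ℕ} (A : Matrix (Fin r) (Fin c) ℝ) : sn A = ‖A‖ := rfl

namespace Matrix

variable {𝕜 : Type*} [RCLike 𝕜] {ι l m n : Type*} [Fintype ι] [Fintype l] [Fintype m]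
  [Fintype n] [DecidableEq n]

lemma l2_opNorm_mul_pow_le (C : Matrix m n 𝕜) (X : Matrix n n 𝕜) (s : ℕ) :
    ‖C * X ^ s‖ ≤ ‖C‖ * ‖X‖ ^ s := by
  induction s with
  | zero => simp
  | succ s ih =>
    calc ‖C * X ^ (s + 1)‖ = ‖C * X ^ s * X‖ := by rw [pow_succ, Matrix.mul_assoc]
      _ ≤ ‖C * X ^ s‖ * ‖X‖ := l2_opNorm_mul _ _
      _ ≤ ‖C‖ * ‖X‖ ^ s * ‖X‖ := by gcongr
      _ = ‖C‖ * ‖X‖ ^ (s + 1) := by ring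

lemma l2_opNorm_pow_sub_pow_le {X Y : Matrix n n 𝕜} {ρ : ℝ} (hX : ‖X‖ ≤ ρ) (hY : ‖Y‖ ≤ ρ)
    (s : ℕ) : ‖X ^ s - Y ^ s‖ ≤ s * ρ ^ (s - 1) * ‖X - Y‖ := by
  have hρ : 0 ≤ ρ := (norm_nonneg _).trans hX
  induction s with
  | zero => simp
  | succ s ih =>
    have htel : X ^ (s + 1) - Y ^ (s + 1) = X * (X ^ s - Y ^ s) + (X - Y) * Y ^ s := by
      simp only [Matrix.mul_sub, Matrix.sub_mul, ← pow_succ']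
      abel
    have hρs : ρ * (s * ρ ^ (s - 1)) = s * ρ ^ s := by
      rcases Nat.eq_zero_or_pos s with rfl | hs
      · simp
      · rw [mul_left_comm, mul_pow_sub_one hs.ne']
    calc ‖X ^ (s + 1) - Y ^ (s + 1)‖
        ≤ ‖X‖ * ‖X ^ s - Y ^ s‖ + ‖X - Y‖ * ‖Y‖ ^ s := by
          rw [htel]
          exact (norm_add_le _ _).trans
            (add_le_add (l2_opNorm_mul _ _) (l2_opNorm_mul_pow_le _ _ _))
      _ ≤ ρ * (s * ρ ^ (s - 1) * ‖X - Y‖) + ‖X - Y‖ * ρ ^ s := by gcongr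
      _ = (s * ρ ^ s + ρ ^ s) * ‖X - Y‖ := by rw [← hρs]; ring
      _ = (s + 1 : ℕ) * ρ ^ (s + 1 - 1) * ‖X - Y‖ := by
          rw [Nat.add_sub_cancel]; push_cast; ring

lemma l2_opNorm_mul_pow_sub_mul_pow_le (C D : Matrix m n 𝕜) (X Y : Matrix n n 𝕜) (s : ℕ) :
    ‖C * X ^ s - D * Y ^ s‖ ≤ ‖C - D‖ * ‖X‖ ^ s + ‖D‖ * ‖X ^ s - Y ^ s‖ := by
  have hsplit : C * X ^ s - D * Y ^ s = (C - D) * X ^ s + D * (X ^ s - Y ^ s) := by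
    simp only [Matrix.sub_mul, Matrix.mul_sub]
    abel
  rw [hsplit]
  exact (norm_add_le _ _).trans (add_le_add (l2_opNorm_mul_pow_le _ _ _) (l2_opNorm_mul _ _))

lemma l2_opNorm_mul_mul_le [DecidableEq m] (U : Matrix l m 𝕜) (R : Matrix m m 𝕜)
    (V : Matrix m n 𝕜) : ‖U * R * V‖ ≤ ‖U‖ * ‖R‖ * ‖V‖ :=
  (l2_opNorm_mul _ _).trans (by gcongr; exact l2_opNorm_mul _ _)

lemma l2_opNorm_conjTranspose_mul_mul_sub_le [DecidableEq m] (X Y : Matrix m n 𝕜)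
    (R : Matrix m m 𝕜) :
    ‖Xᴴ * R * X - Yᴴ * R * Y‖ ≤ (‖X‖ + ‖Y‖) * ‖R‖ * ‖X - Y‖ := by
  have hsplit : Xᴴ * R * X - Yᴴ * R * Y = Xᴴ * R * (X - Y) + (X - Y)ᴴ * R * Y := by
    simp only [conjTranspose_sub, Matrix.mul_sub, Matrix.sub_mul]
    abel
  calc ‖Xᴴ * R * X - Yᴴ * R * Y‖
      ≤ ‖X‖ * ‖R‖ * ‖X - Y‖ + ‖X - Y‖ * ‖R‖ * ‖Y‖ := by
        rw [hsplit]
        refine (norm_add_le _ _).trans (add_le_add ?_ ?_) <;>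
          · refine (l2_opNorm_mul_mul_le _ _ _).trans_eq ?_
            rw [l2_opNorm_conjTranspose]
    _ = (‖X‖ + ‖Y‖) * ‖R‖ * ‖X - Y‖ := by ring

lemma l2_opNorm_cost_sub_le [DecidableEq m] {K K' : Matrix m n 𝕜} {X Y : Matrix n n 𝕜}
    (R : Matrix m m 𝕜) {ε δ : ℝ} {s : ℕ} (hX : ‖X‖ ≤ 1) (hY : ‖Y‖ ≤ 1) (hK : ‖K' - K‖ ≤ ε)
    (hδ : ‖X ^ s - Y ^ s‖ ≤ δ) :
    ‖(K' * X ^ s)ᴴ * R * (K' * X ^ s) - (K * Y ^ s)ᴴ * R * (K * Y ^ s)‖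
      ≤ (2 * ‖K‖ + ε) * ‖R‖ * (ε + ‖K‖ * δ) := by
  have hε : 0 ≤ ε := (norm_nonneg _).trans hK
  have hXs : ‖X‖ ^ s ≤ 1 := pow_le_one₀ (norm_nonneg _) hX
  have hYs : ‖Y‖ ^ s ≤ 1 := pow_le_one₀ (norm_nonneg _) hY
  have hK' : ‖K'‖ ≤ ‖K‖ + ε := by linarith [norm_le_norm_add_norm_sub' K' K]
  calc _ ≤ (‖K' * X ^ s‖ + ‖K * Y ^ s‖) * ‖R‖ * ‖K' * X ^ s - K * Y ^ s‖ :=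
        l2_opNorm_conjTranspose_mul_mul_sub_le _ _ _
    _ ≤ (‖K'‖ * ‖X‖ ^ s + ‖K‖ * ‖Y‖ ^ s) * ‖R‖
          * (‖K' - K‖ * ‖X‖ ^ s + ‖K‖ * ‖X ^ s - Y ^ s‖) := by
        gcongr
        · exact l2_opNorm_mul_pow_le _ _ _
        · exact l2_opNorm_mul_pow_le _ _ _
        · exact l2_opNorm_mul_pow_sub_mul_pow_le _ _ _ _ _
    _ ≤ ((‖K‖ + ε) * 1 + ‖K‖ * 1) * ‖R‖ * (ε * 1 + ‖K‖ * δ) := by gcongr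
    _ = (2 * ‖K‖ + ε) * ‖R‖ * (ε + ‖K‖ * δ) := by ring

lemma l2_opNorm_add_sum_mul_sub_le {p : ι → Type*} [∀ j, Fintype (p j)] [∀ j, DecidableEq (p j)]
    (A : Matrix n n 𝕜) (B : (j : ι) → Matrix n (p j) 𝕜) (K K' : (j : ι) → Matrix (p j) n 𝕜) {ε : ℝ}
    (hK : ∀ j, ‖K' j - K j‖ ≤ ε) :
    ‖(A + ∑ j, B j * K' j) - (A + ∑ j, B j * K j)‖ ≤ (∑ j, ‖B j‖) * ε := by
  rw [add_sub_add_left_eq_sub, ← sum_sub_distrib, sum_mul]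
  refine (norm_sum_le _ _).trans (sum_le_sum fun j _ => ?_)
  rw [← Matrix.mul_sub]
  exact (l2_opNorm_mul _ _).trans (by gcongr; exact hK j)

end Matrix

theorem stmt13_general {N n : ℕ} {m : Fin N → ℕ}
    (A : Matrix (Fin n) (Fin n) ℝ)
    (B : (j : Fin N) → Matrix (Fin n) (Fin (m j)) ℝ)
    (K Ktil : (j : Fin N) → Matrix (Fin (m j)) (Fin n) ℝ)
    (Rij : (j : Fin N) → Matrix (Fin (m j)) (Fin (m j)) ℝ)
    (ε : ℝ) (hε : 0 ≤ ε) (hK : ∀ j, sn (Ktil j - K j) ≤ ε)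
    (hlt : sn (A + ∑ j, B j * K j) + (∑ j, sn (B j)) * ε < 1)
    (M : ℝ)
    (hM : ∀ t : ℕ, 2 ≤ t →
      ((t : ℝ) - 1) * (sn (A + ∑ j, B j * K j) + (∑ j, sn (B j)) * ε) ^ (t - 2) ≤ M) :
    ∀ t : ℕ, 1 ≤ t →
      ∑ j, sn ((Ktil j * (A + ∑ j', B j' * Ktil j') ^ (t - 1))ᵀ * Rij j *
            (Ktil j * (A + ∑ j', B j' * Ktil j') ^ (t - 1))
          - (K j * (A + ∑ j', B j' * K j') ^ (t - 1))ᵀ * Rij j *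
            (K j * (A + ∑ j', B j' * K j') ^ (t - 1)))
        ≤ ε ^ 2 * ∑ j, sn (Rij j) * (sn (K j) * (∑ j', sn (B j')) * M + 1)
          + 2 * ε * ∑ j, sn (Rij j) * sn (K j) * (sn (K j) * (∑ j', sn (B j')) * M + 1) := by
  simp only [sn_eq_l2_opNorm, ← conjTranspose_eq_transpose_of_trivial] at hK hlt hM ⊢
  set F := A + ∑ j, B j * K j
  set F' := A + ∑ j, B j * Ktil j
  set b := ∑ j, ‖B j‖
  set ρ := ‖F‖ + b * ε
  have hFF' : ‖F' - F‖ ≤ b * ε := l2_opNorm_add_sum_mul_sub_le A B K Ktil hK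
  have hF : ‖F‖ ≤ ρ := le_add_of_nonneg_right (by positivity)
  have hF' : ‖F'‖ ≤ ρ := by linarith [norm_le_norm_add_norm_sub' F' F]
  have hM0 : 0 ≤ M := by linarith [show (2 - 1 : ℝ) * ρ ^ 0 ≤ M from mod_cast hM 2 le_rfl]
  have hgrowth : ∀ s : ℕ, s * ρ ^ (s - 1) ≤ M := by
    intro s
    rcases Nat.eq_zero_or_pos s with rfl | hs
    · simpa using hM0
    · simpa [Nat.sub_sub] using hM (s + 1) (by omega)
  intro t _
  have hpow : ‖F' ^ (t - 1) - F ^ (t - 1)‖ ≤ M * (b * ε) :=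
    (l2_opNorm_pow_sub_pow_le hF' hF _).trans
      (mul_le_mul (hgrowth _) hFF' (norm_nonneg _) hM0)
  calc _ ≤ ∑ j, (2 * ‖K j‖ + ε) * ‖Rij j‖ * (ε + ‖K j‖ * (M * (b * ε))) :=
        sum_le_sum fun j _ =>
          l2_opNorm_cost_sub_le (Rij j) (hF'.trans hlt.le) (hF.trans hlt.le) (hK j) hpow
    _ = _ := by
        simp only [mul_sum, ← sum_add_distrib]
        exact sum_congr rfl fun j _ => by ring

/-- control-cost perturbation bound `G_{i2}(ε)`: with
`F = A + Σⱼ Bʲ Kʲ`, `F̃ = A + Σⱼ Bʲ K̃ʲ`, `‖K̃ʲ − Kʲ‖₂ ≤ ε`, `b = Σⱼ ‖Bʲ‖₂`,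
`λ = ‖F‖₂`, `λ + bε < 1` and `M ≥ (t−1)(λ+bε)^{t−2}` for all `t ≥ 2`, one has, for all
`t ≥ 1`,
`Σⱼ ‖(K̃ʲF̃^{t−1})ᵀ Rⁱʲ (K̃ʲF̃^{t−1}) − (KʲF^{t−1})ᵀ Rⁱʲ (KʲF^{t−1})‖₂
  ≤ ε² Σⱼ ‖Rⁱʲ‖₂(‖Kʲ‖₂ b M + 1) + 2ε Σⱼ ‖Rⁱʲ‖₂‖Kʲ‖₂(‖Kʲ‖₂ b M + 1)`. -/
theorem stmt13 {N n : ℕ} {m : Fin N → ℕ}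
    (hN : 0 < N) (hn : 0 < n) (hm : ∀ j, 0 < m j)
    (A : Matrix (Fin n) (Fin n) ℝ)
    (B : (j : Fin N) → Matrix (Fin n) (Fin (m j)) ℝ)
    (K Ktil : (j : Fin N) → Matrix (Fin (m j)) (Fin n) ℝ)
    (Rij : (j : Fin N) → Matrix (Fin (m j)) (Fin (m j)) ℝ)
    (ε : ℝ) (hε : 0 ≤ ε) (hK : ∀ j, sn (Ktil j - K j) ≤ ε)
    (hlt : sn (A + ∑ j, B j * K j) + (∑ j, sn (B j)) * ε < 1)
    (M : ℝ)
    (hM : ∀ t : ℕ, 2 ≤ t →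
      ((t : ℝ) - 1) * (sn (A + ∑ j, B j * K j) + (∑ j, sn (B j)) * ε) ^ (t - 2) ≤ M) :
    ∀ t : ℕ, 1 ≤ t →
      ∑ j, sn ((Ktil j * (A + ∑ j', B j' * Ktil j') ^ (t - 1))ᵀ * Rij j *
            (Ktil j * (A + ∑ j', B j' * Ktil j') ^ (t - 1))
          - (K j * (A + ∑ j', B j' * K j') ^ (t - 1))ᵀ * Rij j *
            (K j * (A + ∑ j', B j' * K j') ^ (t - 1)))
        ≤ ε ^ 2 * ∑ j, sn (Rij j) * (sn (K j) * (∑ j', sn (B j')) * M + 1)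
          + 2 * ε * ∑ j, sn (Rij j) * sn (K j) * (sn (K j) * (∑ j', sn (B j')) * M + 1) :=
  stmt13_general A B K Ktil Rij ε hε hK hlt M hM
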